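/- The function x ↦ √(1/x + 1 − 2√2) is nonnegative and interval-integrable on (0, π/8], and the quantity v₂ := −√(1 + 2√2) + (1/2)·∫ from 0 to π/8 of √(1/x + 1 − 2√2) dx satisfies −1.45 < v₂ < 0. -/
import Mathlib

set_option maxHeartbeats 1000000


open Real MeasureTheory

/-- `√(1-y) ≥ 1 - y/2 - y²/2` for `y ∈ [0,1]`. -/
lemma aux_sqrt_one_sub (y : ℝ) (_h0 : 0 ≤ y) (h1 : y ≤ 1) :
    1 - y / 2 - y ^ 2 / 2 ≤ Real.sqrt (1 - y) := by
  rcases le_or_gt (1 - y / 2 - y ^ 2 / 2) 0 with h | h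
  · exact h.trans (Real.sqrt_nonneg _)
  · rw [Real.le_sqrt h.le (by linarith)]
    nlinarith [sq_nonneg y, sq_nonneg (y * (1 - y))]

theorem newtonian_planar_v_lower_bound :
    (∀ x ∈ Set.Ioc (0:ℝ) (π/8), 0 ≤ Real.sqrt (1/x + 1 - 2 * Real.sqrt 2)) ∧
    IntervalIntegrable (fun x : ℝ => Real.sqrt (1/x + 1 - 2 * Real.sqrt 2))
      volume 0 (π/8) ∧
    (-1.45 < -Real.sqrt (1 + 2 * Real.sqrt 2) +
        (1/2) * ∫ x in (0:ℝ)..(π/8), Real.sqrt (1/x + 1 - 2 * Real.sqrt 2) ∧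
      -Real.sqrt (1 + 2 * Real.sqrt 2) +
        (1/2) * ∫ x in (0:ℝ)..(π/8), Real.sqrt (1/x + 1 - 2 * Real.sqrt 2) < 0) := by
  have pi_lo := Real.pi_gt_d6
  have pi_hi := Real.pi_lt_d6
  set T : ℝ := π / 8 with hTdef
  have hTpos : 0 < T := by positivity
  have hT_lo : 0.39269 < T := by rw [hTdef]; linarith
  have hT_hi : T < 0.3927 := by rw [hTdef]; linarith
  have hs2 : Real.sqrt 2 ^ 2 = 2 := Real.sq_sqrt (by norm_num)
  have hs2nn : 0 ≤ Real.sqrt 2 := Real.sqrt_nonneg 2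
  have hs2_lo : 1.41421 < Real.sqrt 2 := by nlinarith
  have hs2_hi : Real.sqrt 2 < 1.41422 := by nlinarith
  set c : ℝ := 2 * Real.sqrt 2 - 1 with hcdef
  have hc_lo : 1.82842 < c := by rw [hcdef]; linarith
  have hc_hi : c < 1.82844 := by rw [hcdef]; linarith
  have hcpos : 0 < c := by linarith
  set f : ℝ → ℝ := fun x => Real.sqrt (1 / x + 1 - 2 * Real.sqrt 2) with hfdef
  have hfc : ∀ x : ℝ, f x = Real.sqrt (1 / x - c) := by
    intro x; rw [hfdef, hcdef]; ring_nf
  -- sqrt = rpow relations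
  have rpow_half : ∀ x : ℝ, 0 ≤ x → x ^ ((1:ℝ)/2) = Real.sqrt x := by
    intro x hx; rw [Real.sqrt_eq_rpow]
  have rpow_neg_half : ∀ x : ℝ, 0 ≤ x → x ^ (-(1:ℝ)/2) = (Real.sqrt x)⁻¹ := by
    intro x hx
    rw [show (-(1:ℝ)/2) = -((1:ℝ)/2) by ring, Real.rpow_neg hx, rpow_half x hx]
  -- pointwise upper bound on [0, T]
  have hub_pt : ∀ x ∈ Set.Icc (0:ℝ) T, f x ≤ x ^ (-(1:ℝ)/2) := by
    intro x hx
    rcases eq_or_lt_of_le hx.1 with rfl | hxpos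
    · rw [hfc, Real.zero_rpow (by norm_num)]
      have : 1 / (0:ℝ) - c ≤ 0 := by simp; linarith
      exact le_of_eq (Real.sqrt_eq_zero'.2 this)
    · rw [hfc, rpow_neg_half x hxpos.le, ← Real.sqrt_inv, ← one_div]
      exact Real.sqrt_le_sqrt (by linarith)
  -- integrability
  have hint_nh : IntervalIntegrable (fun x : ℝ => x ^ (-(1:ℝ)/2)) volume 0 T :=
    intervalIntegral.intervalIntegrable_rpow' (by norm_num)
  have hmeas : AEStronglyMeasurable f (volume.restrict (Set.uIoc (0:ℝ) T)) := by
    apply Measurable.aestronglyMeasurable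
    fun_prop
  have hint : IntervalIntegrable f volume 0 T := by
    apply hint_nh.mono_fun' hmeas
    have huIoc : Set.uIoc (0:ℝ) T = Set.Ioc 0 T := Set.uIoc_of_le hTpos.le
    filter_upwards [MeasureTheory.ae_restrict_mem measurableSet_uIoc] with x hx
    rw [huIoc] at hx
    have h1 := hub_pt x ⟨hx.1.le, hx.2⟩
    have h2 : 0 ≤ f x := Real.sqrt_nonneg _
    simpa [Real.norm_eq_abs, abs_of_nonneg h2] using h1
  refine ⟨fun x _ => Real.sqrt_nonneg _, hint, ?_, ?_⟩
  · -- lower bound: -1.45 < v₂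
    set g : ℝ → ℝ := fun x =>
      x ^ (-(1:ℝ)/2) - c / 2 * x ^ ((1:ℝ)/2) - c ^ 2 / 2 * x ^ ((3:ℝ)/2) with hgdef
    have hint_g : IntervalIntegrable g volume 0 T := by
      apply IntervalIntegrable.sub
      apply IntervalIntegrable.sub
      · exact hint_nh
      · exact (intervalIntegral.intervalIntegrable_rpow' (by norm_num)).const_mul _
      · exact (intervalIntegral.intervalIntegrable_rpow' (by norm_num)).const_mul _
    -- pointwise: g ≤ f on [0, T]
    have hlb_pt : ∀ x ∈ Set.Icc (0:ℝ) T, g x ≤ f x := by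
      intro x hx
      rcases eq_or_lt_of_le hx.1 with rfl | hxpos
      · simp only [hgdef]
        rw [Real.zero_rpow (by norm_num), Real.zero_rpow (by norm_num),
          Real.zero_rpow (by norm_num)]
        have := Real.sqrt_nonneg (1 / (0:ℝ) + 1 - 2 * Real.sqrt 2)
        simp only [hfdef]
        linarith
      · have hsx : 0 < Real.sqrt x := Real.sqrt_pos.2 hxpos
        have hcx1 : c * x ≤ 1 := by
          exact (mul_le_mul hc_hi.le (le_trans hx.2 hT_hi.le) hxpos.le
            (by norm_num : (0:ℝ) ≤ 1.82844)).trans (by norm_num)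
        have key : 1 - c * x / 2 - (c * x) ^ 2 / 2 ≤ Real.sqrt (1 - c * x) :=
          aux_sqrt_one_sub (c * x) (by positivity) hcx1
        -- f x * √x = √(1 - c x)
        have hf_mul : f x * Real.sqrt x = Real.sqrt (1 - c * x) := by
          rw [hfc, ← Real.sqrt_mul (by
            have : 0 ≤ 1 - c * x := by linarith
            have hx' : (1:ℝ)/x - c = (1 - c*x)/x := by field_simp
            rw [hx']; positivity) x]
          congr 1
          field_simp
        have hg_mul : g x * Real.sqrt x = 1 - c / 2 * x - c ^ 2 / 2 * x ^ 2 := by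
          have h1 : x ^ (-(1:ℝ)/2) * Real.sqrt x = 1 := by
            rw [rpow_neg_half x hxpos.le, inv_mul_cancel₀ hsx.ne']
          have h2 : x ^ ((1:ℝ)/2) * Real.sqrt x = x := by
            rw [rpow_half x hxpos.le, Real.mul_self_sqrt hxpos.le]
          have h3 : x ^ ((3:ℝ)/2) * Real.sqrt x = x ^ 2 := by
            rw [show ((3:ℝ)/2) = 1 + 1/2 by norm_num, Real.rpow_add hxpos,
              Real.rpow_one, mul_assoc, h2]; ring
          simp only [hgdef]
          calc (x ^ (-(1:ℝ)/2) - c / 2 * x ^ ((1:ℝ)/2) - c ^ 2 / 2 * x ^ ((3:ℝ)/2)) * Real.sqrt x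
              = x ^ (-(1:ℝ)/2) * Real.sqrt x - c / 2 * (x ^ ((1:ℝ)/2) * Real.sqrt x)
                - c ^ 2 / 2 * (x ^ ((3:ℝ)/2) * Real.sqrt x) := by ring
            _ = 1 - c / 2 * x - c ^ 2 / 2 * x ^ 2 := by rw [h1, h2, h3]
        have : g x * Real.sqrt x ≤ f x * Real.sqrt x := by
          rw [hf_mul, hg_mul]
          calc 1 - c / 2 * x - c ^ 2 / 2 * x ^ 2
              = 1 - c * x / 2 - (c * x) ^ 2 / 2 := by ring
            _ ≤ Real.sqrt (1 - c * x) := key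
        exact le_of_mul_le_mul_right this hsx
    have hIle : (∫ x in (0:ℝ)..T, g x) ≤ ∫ x in (0:ℝ)..T, f x :=
      intervalIntegral.integral_mono_on hTpos.le hint_g hint hlb_pt
    -- compute ∫ g
    have hI1 : (∫ x in (0:ℝ)..T, x ^ (-(1:ℝ)/2)) = 2 * Real.sqrt T := by
      rw [integral_rpow (Or.inl (by norm_num))]
      rw [show (-(1:ℝ)/2 + 1) = 1/2 by norm_num, Real.zero_rpow (by norm_num),
        rpow_half T hTpos.le]
      ring
    have hI2 : (∫ x in (0:ℝ)..T, x ^ ((1:ℝ)/2)) = 2/3 * (T * Real.sqrt T) := by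
      rw [integral_rpow (Or.inl (by norm_num))]
      rw [show ((1:ℝ)/2 + 1) = 1 + 1/2 by norm_num, Real.zero_rpow (by norm_num),
        Real.rpow_add hTpos, Real.rpow_one, rpow_half T hTpos.le]
      ring
    have hI3 : (∫ x in (0:ℝ)..T, x ^ ((3:ℝ)/2)) = 2/5 * (T ^ 2 * Real.sqrt T) := by
      rw [integral_rpow (Or.inl (by norm_num))]
      rw [show ((3:ℝ)/2 + 1) = 2 + 1/2 by norm_num, Real.zero_rpow (by norm_num),
        Real.rpow_add hTpos, rpow_half T hTpos.le, Real.rpow_two]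
      ring
    have hIg : (∫ x in (0:ℝ)..T, g x)
        = 2 * Real.sqrt T - c / 3 * (T * Real.sqrt T) - c ^ 2 / 5 * (T ^ 2 * Real.sqrt T) := by
      simp only [hgdef]
      rw [intervalIntegral.integral_sub (by
            apply IntervalIntegrable.sub hint_nh
            exact (intervalIntegral.intervalIntegrable_rpow' (by norm_num)).const_mul _)
          ((intervalIntegral.intervalIntegrable_rpow' (by norm_num)).const_mul _),
        intervalIntegral.integral_sub hint_nh
          ((intervalIntegral.intervalIntegrable_rpow' (by norm_num)).const_mul _),
        intervalIntegral.integral_const_mul, intervalIntegral.integral_const_mul,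
        hI1, hI2, hI3]
      ring
    -- numeric bounds on the sqrts
    have hw : Real.sqrt T ^ 2 = T := Real.sq_sqrt hTpos.le
    have hwnn : 0 ≤ Real.sqrt T := Real.sqrt_nonneg T
    have hw_lo : 0.6266 < Real.sqrt T := by nlinarith
    have hw_hi : Real.sqrt T < 0.62666 := by nlinarith
    have hu : Real.sqrt (1 + 2 * Real.sqrt 2) ^ 2 = 1 + 2 * Real.sqrt 2 :=
      Real.sq_sqrt (by positivity)
    have hunn : 0 ≤ Real.sqrt (1 + 2 * Real.sqrt 2) := Real.sqrt_nonneg _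
    have hu_hi : Real.sqrt (1 + 2 * Real.sqrt 2) < 1.95664 := by nlinarith
    have hfinal : (1.038 : ℝ) < ∫ x in (0:ℝ)..T, f x := by
      refine lt_of_lt_of_le ?_ hIle
      rw [hIg]
      nlinarith [mul_pos hTpos hTpos, mul_nonneg hTpos.le hwnn,
        mul_nonneg (mul_nonneg hTpos.le hTpos.le) hwnn,
        mul_lt_mul_of_pos_left hw_lo (mul_pos hcpos hTpos)]
    have hfinal' : (1.038 : ℝ) < intervalIntegral f 0 T volume := hfinal
    nlinarith [hfinal', hu_hi]
  · -- upper bound: v₂ < 0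
    have hub : (∫ x in (0:ℝ)..T, f x) ≤ ∫ x in (0:ℝ)..T, x ^ (-(1:ℝ)/2) :=
      intervalIntegral.integral_mono_on hTpos.le hint hint_nh hub_pt
    have hI1 : (∫ x in (0:ℝ)..T, x ^ (-(1:ℝ)/2)) = 2 * Real.sqrt T := by
      rw [integral_rpow (Or.inl (by norm_num))]
      rw [show (-(1:ℝ)/2 + 1) = 1/2 by norm_num, Real.zero_rpow (by norm_num),
        rpow_half T hTpos.le]
      ring
    have hlt : Real.sqrt T < Real.sqrt (1 + 2 * Real.sqrt 2) := by
      apply Real.sqrt_lt_sqrt hTpos.le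
      nlinarith
    rw [hI1] at hub
    have hub' : intervalIntegral f 0 T volume ≤ 2 * Real.sqrt T := hub
    nlinarith [hub', hlt, Real.sqrt_nonneg T]
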